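/- Let G be a game with weights in ℤ ∪ {∞}, let σ₀ be an En-optimal strategy for Min in G (i.e., for every vertex u, sup over infinite paths π from u consistent with σ₀ of En(w(π)) equals En_G(u)), and let π = v₀ → v₁ → ⋯ → v_k be a finite path consistent with σ₀ such that En_G(v_k) < ∞. Then sum(π) ≤ En_G(v₀) − En_G(v_k), where sum(π) = ∑_{i<k} w(v_i, v_{i+1}). -/

import Mathlib

attribute [local instance] Classical.propDecidable

/-- A game: a directed graph `E` on vertex set `V` with no sink, edge weights `wt : V → V → R`,
and a partition of the vertices into those belonging to Min (`isMin`) and to Max (the rest). -/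
structure Game (V : Type) (R : Type) where
  E : V → V → Prop
  wt : V → V → R
  isMin : V → Prop
  nosink : ∀ v, ∃ u, E v u

namespace Game

variable {V : Type} {R : Type}

/-- A strategy for Min: a choice of an outgoing edge at every Min vertex. -/
def MinStrat (G : Game V R) : Type := {σ : V → V // ∀ v, G.isMin v → G.E v (σ v)}

/-- A strategy for Max: a choice of an outgoing edge at every Max vertex. -/
def MaxStrat (G : Game V R) : Type := {τ : V → V // ∀ v, ¬ G.isMin v → G.E v (τ v)}

/-- An infinite path in the graph. -/
def IsPath (G : Game V R) (π : ℕ → V) : Prop := ∀ i, G.E (π i) (π (i + 1))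

/-- Consistency of an infinite path with a Min strategy. -/
def ConsMin (G : Game V R) (σ : G.MinStrat) (π : ℕ → V) : Prop :=
  ∀ i, G.isMin (π i) → π (i + 1) = σ.1 (π i)

/-- Consistency of an infinite path with a Max strategy. -/
def ConsMax (G : Game V R) (τ : G.MaxStrat) (π : ℕ → V) : Prop :=
  ∀ i, ¬ G.isMin (π i) → π (i + 1) = τ.1 (π i)

/-- Infinite paths starting in `v` consistent with the Min strategy `σ`. -/
def PlaysMin (G : Game V R) (σ : G.MinStrat) (v : V) : Type :=
  {π : ℕ → V // π 0 = v ∧ G.IsPath π ∧ G.ConsMin σ π}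

/-- Infinite paths starting in `v` consistent with the Max strategy `τ`. -/
def PlaysMax (G : Game V R) (τ : G.MaxStrat) (v : V) : Type :=
  {π : ℕ → V // π 0 = v ∧ G.IsPath π ∧ G.ConsMax τ π}

/-- The sequence of weights along an infinite path. -/
def wseq (G : Game V R) (π : ℕ → V) : ℕ → R := fun i => G.wt (π i) (π (i + 1))

/-- Embedding of `ℤ ∪ {∞}` into the extended reals. -/
noncomputable def toE (x : WithTop ℤ) : EReal :=
  if h : x = ⊤ then ⊤ else (((x.untop h : ℤ) : ℝ) : EReal)

/-- Embedding of `ℕ ∪ {∞}` into the extended reals. -/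
noncomputable def enatToE (x : ENat) : EReal :=
  if x = ⊤ then ⊤ else ((x.toNat : ℝ) : EReal)

/-- Conversion `ℤ ∪ {∞} → ℕ ∪ {∞}` (exact on non-negative values). -/
noncomputable def wToN (x : WithTop ℤ) : ENat :=
  if h : x = ⊤ then ⊤ else ((x.untop h).toNat : ENat)

/-- The mean-payoff valuation `MP(w₀w₁⋯) = limsup_k (1/k) ∑_{i<k} w_i`. -/
noncomputable def MPv (w : ℕ → ℤ) : EReal :=
  Filter.limsup
    (fun k : ℕ => ((((∑ i ∈ Finset.range k, w i : ℤ) : ℝ) / (k : ℝ) : ℝ) : EReal))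
    Filter.atTop

/-- The energy valuation `En(w₀w₁⋯) = sup_k ∑_{i<k} w_i` (weights given in `EReal`). -/
noncomputable def En (w : ℕ → EReal) : EReal :=
  ⨆ k : ℕ, ∑ i ∈ Finset.range k, w i

/-- The positive-energy valuation `En⁺(w₀w₁⋯) = ∑_{i<k¬} w_i ∈ ℕ ∪ {∞}` where `k¬` is the
first index of a negative weight (the whole, possibly infinite, sum if no weight is negative). -/
noncomputable def EnP (w : ℕ → WithTop ℤ) : ENat :=
  if h : ∃ k, w k < 0 then ∑ i ∈ Finset.range (Nat.find h), wToN (w i)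
  else ⨆ k : ℕ, ∑ i ∈ Finset.range k, wToN (w i)

/-- The mean-payoff value of a vertex:
`MP_G(v) = inf over Min strategies σ of sup over plays π from v consistent with σ of MP(w(π))`. -/
noncomputable def MPVal (G : Game V ℤ) (v : V) : EReal :=
  ⨅ σ : G.MinStrat, ⨆ π : G.PlaysMin σ v, MPv (G.wseq π.1)

/-- The energy value of a vertex. -/
noncomputable def EnVal (G : Game V (WithTop ℤ)) (v : V) : EReal :=
  ⨅ σ : G.MinStrat, ⨆ π : G.PlaysMin σ v, En (fun i => toE (G.wseq π.1 i))

/-- The positive-energy value of a vertex. -/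
noncomputable def EnPVal (G : Game V (WithTop ℤ)) (v : V) : ENat :=
  ⨅ σ : G.MinStrat, ⨆ π : G.PlaysMin σ v, EnP (G.wseq π.1)

/-- Lift a game with integer weights to a game with weights in `ℤ ∪ {∞}`. -/
def liftZ (G : Game V ℤ) : Game V (WithTop ℤ) :=
  { E := G.E, wt := fun u v => (G.wt u v : WithTop ℤ), isMin := G.isMin, nosink := G.nosink }

/-- The `φ`-modified weight: `w_φ(v,v') = w(v,v') + φ(v') − φ(v)` when `w(v,v')`, `φ(v)`, `φ(v')`
are all finite, and `∞` otherwise. -/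
noncomputable def modWt (w : V → V → WithTop ℤ) (φ : V → ENat) (u v : V) : WithTop ℤ :=
  if w u v = ⊤ ∨ φ u = ⊤ ∨ φ v = ⊤ then ⊤
  else (((w u v).untopD 0 + ((φ v).toNat : ℤ) - ((φ u).toNat : ℤ) : ℤ) : WithTop ℤ)

/-- The `φ`-modified game `G_φ`. -/
noncomputable def modify (G : Game V (WithTop ℤ)) (φ : V → ENat) : Game V (WithTop ℤ) :=
  { G with wt := modWt G.wt φ }

/-- `π 0 → π 1 → ⋯ → π k` is a simple cycle: `k ≥ 1`, consecutive edges, `π k = π 0`,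
and `π 0, …, π (k-1)` pairwise distinct. -/
def IsSimpleCycle (G : Game V R) (π : ℕ → V) (k : ℕ) : Prop :=
  1 ≤ k ∧ (∀ i < k, G.E (π i) (π (i + 1))) ∧ π k = π 0 ∧
    ∀ i < k, ∀ j < k, π i = π j → i = j

/-- A game is simple if every simple cycle has nonzero sum of weights. -/
def IsSimpleR [AddCommMonoid R] (G : Game V R) : Prop :=
  ∀ π k, IsSimpleCycle G π k → (∑ i ∈ Finset.range k, G.wt (π i) (π (i + 1))) ≠ 0

/-- `W = max_{e ∈ E} |w(e)|`. -/
noncomputable def maxW (G : Game V ℤ) [Fintype V] : ℕ :=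
  Finset.sup Finset.univ (fun p : V × V => if G.E p.1 p.2 then (G.wt p.1 p.2).natAbs else 0)

/-- The ESL iteration: `G₀ = G` and `G_{j+1} = (G_j)_{φ_j}` where `φ_j = En⁺_{G_j}`. -/
noncomputable def esl (G : Game V (WithTop ℤ)) : ℕ → Game V (WithTop ℤ)
  | 0 => G
  | j + 1 => modify (esl G j) (EnPVal (esl G j))

/-- The accumulated ESL potential `Φ_j = φ₀ + ⋯ + φ_{j−1}`. -/
noncomputable def eslPhi (G : Game V (WithTop ℤ)) (j : ℕ) (v : V) : ENat :=
  ∑ i ∈ Finset.range j, EnPVal (esl G i) v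

/-- The set of vertices from which Min can ensure to immediately visit a negative-weight edge:
Min vertices with some negative outgoing edge, and Max vertices all of whose outgoing edges
are negative. -/
def NegSet (G : Game V (WithTop ℤ)) : Set V :=
  {v | (G.isMin v ∧ ∃ u, G.E v u ∧ G.wt v u < 0) ∨
       (¬ G.isMin v ∧ ∀ u, G.E v u → G.wt v u < 0)}

end Game

open Game

/-!
Prepending the edge `u → v` to a `σ₀`-play from `v` gives a `σ₀`-play from `u` whose energy is
at least `w(u, v)` plus that of the original play. Since `En_G(v)` is at most the worst energy of a
`σ₀`-play from `v`, while `σ₀` is optimal at `u`, every edge of the path satisfies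
`w(vᵢ, vᵢ₊₁) + En_G(vᵢ₊₁) ≤ En_G(vᵢ)`, and these inequalities telescope. As
`0 ≤ En_G(v_k) < ∞`, subtracting `En_G(v_k)` in `EReal` is exact.
-/

lemma EReal.add_iSup_le {ι : Sort*} {c T : EReal} {f : ι → EReal} (h : ∀ i, c + f i ≤ T) :
    c + ⨆ i, f i ≤ T :=
  EReal.add_le_of_forall_lt fun _ ha _ hb =>
    let ⟨i, hi⟩ := lt_iSup_iff.1 hb
    (add_le_add ha.le hi.le).trans (h i)

lemma Finset.sum_range_add_le_of_add_le {α : Type*} [AddCommMonoid α] [PartialOrder α]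
    [IsOrderedAddMonoid α] {a f : ℕ → α} {k : ℕ} (h : ∀ i < k, a i + f (i + 1) ≤ f i) :
    ∑ i ∈ Finset.range k, a i + f k ≤ f 0 := by
  induction k with
  | zero => simp
  | succ n ih =>
    calc ∑ i ∈ Finset.range (n + 1), a i + f (n + 1)
        = ∑ i ∈ Finset.range n, a i + (a n + f (n + 1)) := by
          rw [Finset.sum_range_succ, add_assoc]
      _ ≤ ∑ i ∈ Finset.range n, a i + f n := add_le_add_right (h n n.lt_succ_self) _
      _ ≤ f 0 := ih fun i hi => h i (hi.trans n.lt_succ_self)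

namespace Game

lemma En_nonneg (w : ℕ → EReal) : 0 ≤ En w :=
  le_iSup_of_le 0 (by simp)

lemma add_En_tail_le (w : ℕ → EReal) : w 0 + En (fun i => w (i + 1)) ≤ En w :=
  EReal.add_iSup_le fun m => le_iSup_of_le (m + 1) (by rw [Finset.sum_range_succ', add_comm])

variable {V : Type}

section

variable {R : Type} {G : Game V R}

lemma PlaysMin.nonempty (σ : G.MinStrat) (v : V) : Nonempty (G.PlaysMin σ v) := by
  let next : V → V := fun u => if G.isMin u then σ.1 u else (G.nosink u).choose
  have hnext : ∀ u, G.E u (next u) ∧ (G.isMin u → next u = σ.1 u) := fun u => by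
    by_cases hu : G.isMin u
    · simpa [next, hu] using σ.2 u hu
    · simpa [next, hu] using (G.nosink u).choose_spec
  refine ⟨⟨fun n => next^[n] v, rfl, fun i => ?_, fun i => ?_⟩⟩
  · simpa only [Function.iterate_succ_apply'] using (hnext _).1
  · simpa only [Function.iterate_succ_apply'] using (hnext _).2

def PlaysMin.cons {σ : G.MinStrat} {v : V} (u : V) (ρ : G.PlaysMin σ v) (huv : G.E u v)
    (hσ : G.isMin u → v = σ.1 u) : G.PlaysMin σ u := by
  refine ⟨fun n => Nat.casesOn n u ρ.1, rfl, fun i => ?_, fun i => ?_⟩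
  · cases i with
    | zero => simpa [ρ.2.1] using huv
    | succ m => exact ρ.2.2.1 m
  · cases i with
    | zero => simpa [ρ.2.1] using hσ
    | succ m => exact ρ.2.2.2 m

end

lemma toE_wt_add_iSup_En_le (G : Game V (WithTop ℤ)) {σ : G.MinStrat} {u v : V}
    (huv : G.E u v) (hσ : G.isMin u → v = σ.1 u) :
    toE (G.wt u v) + ⨆ ρ : G.PlaysMin σ v, En (fun i => toE (G.wseq ρ.1 i))
      ≤ ⨆ ρ : G.PlaysMin σ u, En (fun i => toE (G.wseq ρ.1 i)) :=
  EReal.add_iSup_le fun ρ => le_iSup_of_le (ρ.cons u huv hσ) <| by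
    simpa [wseq, PlaysMin.cons, ρ.2.1] using
      add_En_tail_le (fun i => toE (G.wseq (ρ.cons u huv hσ).1 i))

lemma toE_wt_add_EnVal_le (G : Game V (WithTop ℤ)) {σ : G.MinStrat} {u v : V}
    (hopt : ⨆ ρ : G.PlaysMin σ u, En (fun i => toE (G.wseq ρ.1 i)) = EnVal G u)
    (huv : G.E u v) (hσ : G.isMin u → v = σ.1 u) :
    toE (G.wt u v) + EnVal G v ≤ EnVal G u :=
  calc toE (G.wt u v) + EnVal G v
      ≤ toE (G.wt u v) + ⨆ ρ : G.PlaysMin σ v, En (fun i => toE (G.wseq ρ.1 i)) :=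
        add_le_add_right (iInf_le _ σ) _
    _ ≤ EnVal G u := (toE_wt_add_iSup_En_le G huv hσ).trans_eq hopt

lemma EnVal_nonneg (G : Game V (WithTop ℤ)) (v : V) : 0 ≤ EnVal G v :=
  le_iInf fun σ => (PlaysMin.nonempty σ v).elim fun ρ => le_iSup_of_le ρ (En_nonneg _)

end Game

theorem optimal_strategy_sum_bound_general {V : Type} (G : Game V (WithTop ℤ))
    (σ₀ : G.MinStrat)
    (hopt : ∀ u : V,
      (⨆ π : G.PlaysMin σ₀ u, En (fun i => toE (G.wseq π.1 i))) = EnVal G u)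
    (π : ℕ → V) (k : ℕ)
    (hpath : ∀ i < k, G.E (π i) (π (i + 1)))
    (hcons : ∀ i < k, G.isMin (π i) → π (i + 1) = σ₀.1 (π i))
    (hfin : EnVal G (π k) < ⊤) :
    (∑ i ∈ Finset.range k, toE (G.wt (π i) (π (i + 1))))
      ≤ EnVal G (π 0) - EnVal G (π k) := by
  have hsum := Finset.sum_range_add_le_of_add_le (f := fun i => EnVal G (π i)) fun i hi =>
    toE_wt_add_EnVal_le G (hopt (π i)) (hpath i hi) (hcons i hi)
  exact (EReal.le_sub_iff_add_le (Or.inl (EReal.bot_lt_zero.trans_le (EnVal_nonneg G (π k))).ne')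
    (Or.inl hfin.ne)).2 hsum

/-- Along a finite path consistent with an `En`-optimal Min strategy and ending in a vertex of
finite energy, the sum of weights is at most `En_G(v₀) − En_G(v_k)`. -/
theorem optimal_strategy_sum_bound {V : Type} [Fintype V] (G : Game V (WithTop ℤ))
    (σ₀ : G.MinStrat)
    (hopt : ∀ u : V,
      (⨆ π : G.PlaysMin σ₀ u, En (fun i => toE (G.wseq π.1 i))) = EnVal G u)
    (π : ℕ → V) (k : ℕ)
    (hpath : ∀ i < k, G.E (π i) (π (i + 1)))
    (hcons : ∀ i < k, G.isMin (π i) → π (i + 1) = σ₀.1 (π i))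
    (hfin : EnVal G (π k) < ⊤) :
    (∑ i ∈ Finset.range k, toE (G.wt (π i) (π (i + 1))))
      ≤ EnVal G (π 0) - EnVal G (π k) :=
  optimal_strategy_sum_bound_general G σ₀ hopt π k hpath hcons hfin
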